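/- arXiv:2407.15638 — 8 statements merged into one kernel-verified Lean document; each statement's English description precedes it below -/
import Mathlib

section
/- If 0 < α₁ ≤ α₂ ≤ 1 and λ > 0, then MPHR(α₁; λ; F̄) is smaller than MPHR(α₂; λ; F̄) in the hazard rate order; equivalently, the ratio x ↦ [α₂ F̄^λ(x)/(1 - (1-α₂)F̄^λ(x))] / [α₁ F̄^λ(x)/(1 - (1-α₁)F̄^λ(x))] = (α₂/α₁)·(1 - (1-α₁)F̄^λ(x))/(1 - (1-α₂)F̄^λ(x)) is increasing in x for any decreasing baseline survival function F̄ with values in (0,1). -/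
/-- If `0 < α₁ ≤ α₂ ≤ 1` and `λ > 0`, then `MPHR(α₁;λ;F̄) ≤_hr MPHR(α₂;λ;F̄)`:
the ratio `(α₂/α₁) * (1-(1-α₁)F̄^λ(x)) / (1-(1-α₂)F̄^λ(x))` of the two survival
functions is increasing in `x`, for any decreasing baseline `F̄` with values in `(0,1)`. -/
theorem mphr_hazard_rate_order (F : ℝ → ℝ) (hanti : Antitone F)
    (hF : ∀ x, F x ∈ Set.Ioo (0:ℝ) 1) (α₁ α₂ lam : ℝ)
    (h1 : 0 < α₁) (h12 : α₁ ≤ α₂) (h2 : α₂ ≤ 1) (hlam : 0 < lam) :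
    Monotone (fun x =>
      (α₂ / α₁) * (1 - (1 - α₁) * F x ^ lam) / (1 - (1 - α₂) * F x ^ lam)) := by
  intro x y hxy
  set a := 1 - α₁ with ha
  set b := 1 - α₂ with hb
  have hab : b ≤ a := by simp [ha, hb]; linarith
  have hb0 : 0 ≤ b := by linarith
  have hb1 : b < 1 := by linarith
  have ha1 : a < 1 := by linarith
  have ha0 : 0 ≤ a := by linarith
  obtain ⟨hFx0, hFx1⟩ := hF x
  obtain ⟨hFy0, hFy1⟩ := hF y
  set t := F x ^ lam with ht
  set s := F y ^ lam with hs
  have ht0 : 0 < t := Real.rpow_pos_of_pos hFx0 lam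
  have hs0 : 0 < s := Real.rpow_pos_of_pos hFy0 lam
  have ht1 : t < 1 := Real.rpow_lt_one hFx0.le hFx1 hlam
  have hs1 : s < 1 := Real.rpow_lt_one hFy0.le hFy1 hlam
  have hst : s ≤ t :=
    Real.rpow_le_rpow hFy0.le (hanti hxy) hlam.le
  have hdt : 0 < 1 - b * t := by nlinarith
  have hds : 0 < 1 - b * s := by nlinarith
  have hc : 0 < α₂ / α₁ := div_pos (lt_of_lt_of_le h1 h12) h1
  simp only
  rw [div_le_div_iff₀ hdt hds]
  have key : (1 - a * t) * (1 - b * s) ≤ (1 - a * s) * (1 - b * t) := by nlinarith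
  nlinarith [mul_le_mul_of_nonneg_left key hc.le]
end

section
/- Let u ∈ (0,1), λ > 0, and write ᾱᵢ = 1 - αᵢ. For the function G(p₁,p₂,α₁,α₂) = p₁·α₁u^λ/(1-ᾱ₁u^λ) + p₂·α₂u^λ/(1-ᾱ₂u^λ), the expression H = (p₁-p₂)(∂G/∂p₁ - ∂G/∂p₂) + (α₁-α₂)(∂G/∂α₁ - ∂G/∂α₂) has the same sign as (α₁-α₂)(u^λ - u^{2λ})(2 - ᾱ₁u^λ - ᾱ₂u^λ)[p₁(1-ᾱ₂u^λ) - p₂(1-ᾱ₁u^λ)]. -/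
set_option maxHeartbeats 2000000


/-- Two-component MPHR mixture survival value with common rate `λ` and
baseline survival value `u`. -/
noncomputable def mphrMix2 (u lam p₁ p₂ α₁ α₂ : ℝ) : ℝ :=
  p₁ * (α₁ * u ^ lam / (1 - (1 - α₁) * u ^ lam)) +
  p₂ * (α₂ * u ^ lam / (1 - (1 - α₂) * u ^ lam))

lemma sign_div_pos' (x c : ℝ) (hc : 0 < c) : Real.sign (x / c) = Real.sign x := by
  rcases lt_trichotomy x 0 with h | h | h
  · rw [Real.sign_of_neg h, Real.sign_of_neg (div_neg_of_neg_of_pos h hc)]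
  · simp [h]
  · rw [Real.sign_of_pos h, Real.sign_of_pos (div_pos h hc)]

lemma alpha_deriv (v p q α β c : ℝ) (hd : 1 - (1 - α) * v ≠ 0) :
    deriv (fun t : ℝ => p * (t * v / (1 - (1 - t) * v)) + q * c) α =
      p * (v * (1 - v) / (1 - (1 - α) * v) ^ 2) := by
  have hnum : HasDerivAt (fun t : ℝ => t * v) v α := by
    simpa using (hasDerivAt_id α).mul_const v
  have hden : HasDerivAt (fun t : ℝ => 1 - (1 - t) * v) v α := by
    have : HasDerivAt (fun t : ℝ => (1 - t) * v) (-v) α := by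
      simpa using (((hasDerivAt_id α).const_sub 1).mul_const v)
    simpa using this.const_sub 1
  have hdiv := hnum.div hden hd
  have h := ((hdiv.const_mul p).add_const (q * c)).deriv
  rw [show (fun t : ℝ => p * (t * v / (1 - (1 - t) * v)) + q * c) = fun x => p * ((fun t : ℝ => t * v) / fun t : ℝ => 1 - (1 - t) * v) x + q * c from rfl, h]
  have : v * (1 - (1 - α) * v) - α * v * v = v * (1 - v) := by ring
  rw [this]

/-- The Schur-condition expression
`H = (p₁-p₂)(∂G/∂p₁ - ∂G/∂p₂) + (α₁-α₂)(∂G/∂α₁ - ∂G/∂α₂)` for the two-component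
MPHR mixture has the same sign as
`(α₁-α₂)(u^λ - u^(2λ))(2 - ᾱ₁u^λ - ᾱ₂u^λ)[p₁(1-ᾱ₂u^λ) - p₂(1-ᾱ₁u^λ)]`. -/
theorem mphr_mix_schur_sign (u lam p₁ p₂ α₁ α₂ : ℝ) (hu : u ∈ Set.Ioo (0:ℝ) 1)
    (hlam : 0 < lam) (hp₁ : 0 < p₁) (hp₂ : 0 < p₂)
    (hα₁ : α₁ ∈ Set.Ioc (0:ℝ) 1) (hα₂ : α₂ ∈ Set.Ioc (0:ℝ) 1) :
    Real.sign
      ((p₁ - p₂) *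
        (deriv (fun t => mphrMix2 u lam t p₂ α₁ α₂) p₁ -
         deriv (fun t => mphrMix2 u lam p₁ t α₁ α₂) p₂) +
       (α₁ - α₂) *
        (deriv (fun t => mphrMix2 u lam p₁ p₂ t α₂) α₁ -
         deriv (fun t => mphrMix2 u lam p₁ p₂ α₁ t) α₂)) =
    Real.sign
      ((α₁ - α₂) * (u ^ lam - u ^ (2 * lam)) *
        (2 - (1 - α₁) * u ^ lam - (1 - α₂) * u ^ lam) *
        (p₁ * (1 - (1 - α₂) * u ^ lam) - p₂ * (1 - (1 - α₁) * u ^ lam))) := by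
  set v : ℝ := u ^ lam with hv
  have hv0 : 0 < v := Real.rpow_pos_of_pos hu.1 lam
  have hv1 : v < 1 := Real.rpow_lt_one hu.1.le hu.2 hlam
  have hv2 : u ^ (2 * lam) = v ^ 2 := by
    rw [mul_comm, Real.rpow_mul hu.1.le, hv]
    norm_num [Real.rpow_two]
  have hd₁ : 0 < 1 - (1 - α₁) * v := by nlinarith [hα₁.1, hα₁.2]
  have hd₂ : 0 < 1 - (1 - α₂) * v := by nlinarith [hα₂.1, hα₂.2]
  have hp1d : deriv (fun t => mphrMix2 u lam t p₂ α₁ α₂) p₁ =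
      α₁ * v / (1 - (1 - α₁) * v) := by
    have h : HasDerivAt (fun t : ℝ => t * (α₁ * v / (1 - (1 - α₁) * v)) +
        p₂ * (α₂ * v / (1 - (1 - α₂) * v))) (α₁ * v / (1 - (1 - α₁) * v)) p₁ := by
      simpa using ((hasDerivAt_id p₁).mul_const
        (α₁ * v / (1 - (1 - α₁) * v))).add_const (p₂ * (α₂ * v / (1 - (1 - α₂) * v)))
    simpa [mphrMix2, hv] using h.deriv
  have hp2d : deriv (fun t => mphrMix2 u lam p₁ t α₁ α₂) p₂ =
      α₂ * v / (1 - (1 - α₂) * v) := by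
    have h : HasDerivAt (fun t : ℝ => p₁ * (α₁ * v / (1 - (1 - α₁) * v)) +
        t * (α₂ * v / (1 - (1 - α₂) * v))) (α₂ * v / (1 - (1 - α₂) * v)) p₂ := by
      simpa using (((hasDerivAt_id p₂).mul_const
        (α₂ * v / (1 - (1 - α₂) * v))).const_add (p₁ * (α₁ * v / (1 - (1 - α₁) * v))))
    simpa [mphrMix2, hv] using h.deriv
  have ha1d : deriv (fun t => mphrMix2 u lam p₁ p₂ t α₂) α₁ =
      p₁ * (v * (1 - v) / (1 - (1 - α₁) * v) ^ 2) := by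
    have := alpha_deriv v p₁ p₂ α₁ α₂ (α₂ * v / (1 - (1 - α₂) * v)) hd₁.ne'
    simpa [mphrMix2, hv, mul_comm, mul_assoc, mul_left_comm] using this
  have ha2d : deriv (fun t => mphrMix2 u lam p₁ p₂ α₁ t) α₂ =
      p₂ * (v * (1 - v) / (1 - (1 - α₂) * v) ^ 2) := by
    have := alpha_deriv v p₂ p₁ α₂ α₁ (α₁ * v / (1 - (1 - α₁) * v)) hd₂.ne'
    have h2 : deriv (fun t : ℝ => p₁ * (α₁ * v / (1 - (1 - α₁) * v)) +
        p₂ * (t * v / (1 - (1 - t) * v))) α₂ =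
        p₂ * (v * (1 - v) / (1 - (1 - α₂) * v) ^ 2) := by
      have hfun : (fun t : ℝ => p₁ * (α₁ * v / (1 - (1 - α₁) * v)) +
          p₂ * (t * v / (1 - (1 - t) * v))) =
          (fun t : ℝ => p₂ * (t * v / (1 - (1 - t) * v)) +
          p₁ * (α₁ * v / (1 - (1 - α₁) * v))) := by
        funext t; ring
      rw [hfun]; exact this
    simpa [mphrMix2, hv, mul_comm, mul_assoc, mul_left_comm] using h2
  rw [hp1d, hp2d, ha1d, ha2d, hv2]
  set d₁ : ℝ := 1 - (1 - α₁) * v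
  set d₂ : ℝ := 1 - (1 - α₂) * v
  have key : (p₁ - p₂) * (α₁ * v / d₁ - α₂ * v / d₂) +
      (α₁ - α₂) * (p₁ * (v * (1 - v) / d₁ ^ 2) - p₂ * (v * (1 - v) / d₂ ^ 2)) =
      ((α₁ - α₂) * (v - v ^ 2) * (2 - (1 - α₁) * v - (1 - α₂) * v) *
        (p₁ * d₂ - p₂ * d₁)) / (d₁ ^ 2 * d₂ ^ 2) := by
    have h1 : d₁ ≠ 0 := hd₁.ne'
    have h2 : d₂ ≠ 0 := hd₂.ne'
    field_simp
    ring
  rw [key]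
  exact sign_div_pos' _ _ (by positivity)
end

section
/- Let u ∈ (0,1), λ > 0, p₁ ≥ p₂ > 0 and 0 < α₁ ≤ α₂ ≤ 1. Then (α₁-α₂)·(u^λ - u^{2λ})·(2 - (1-α₁)u^λ - (1-α₂)u^λ)·[p₁(1-(1-α₂)u^λ) - p₂(1-(1-α₁)u^λ)] ≤ 0. -/
/-- key sign inequality for Theorem 1(i) on `K₂`. -/
theorem mphr_sign_K2 (u lam p₁ p₂ α₁ α₂ : ℝ) (hu : u ∈ Set.Ioo (0:ℝ) 1)
    (hlam : 0 < lam) (hp : p₁ ≥ p₂) (hp₂ : 0 < p₂)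
    (hα₁ : 0 < α₁) (hα : α₁ ≤ α₂) (hα₂ : α₂ ≤ 1) :
    (α₁ - α₂) * (u ^ lam - u ^ (2 * lam)) *
      (2 - (1 - α₁) * u ^ lam - (1 - α₂) * u ^ lam) *
      (p₁ * (1 - (1 - α₂) * u ^ lam) - p₂ * (1 - (1 - α₁) * u ^ lam)) ≤ 0 := by
  obtain ⟨hu0, hu1⟩ := hu
  set v := u ^ lam with hv
  have hv0 : 0 < v := Real.rpow_pos_of_pos hu0 lam
  have hv1 : v < 1 := Real.rpow_lt_one hu0.le hu1 hlam
  have h2 : u ^ (2 * lam) = v ^ 2 := by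
    rw [hv, ← Real.rpow_natCast (u ^ lam) 2, ← Real.rpow_mul hu0.le]
    ring_nf
  rw [h2]
  have hA : α₁ - α₂ ≤ 0 := by linarith
  have hB : 0 ≤ v - v ^ 2 := by nlinarith
  have h1v : (1 - α₁) * v ≤ 1 := by nlinarith
  have h2v : (1 - α₂) * v ≤ 1 := by nlinarith
  have hC : 0 ≤ 2 - (1 - α₁) * v - (1 - α₂) * v := by linarith
  have hD : 0 ≤ p₁ * (1 - (1 - α₂) * v) - p₂ * (1 - (1 - α₁) * v) := by nlinarith [mul_nonneg (sub_nonneg.2 hp) (by nlinarith : (0:ℝ) ≤ 1 - (1 - α₂) * v), mul_nonneg hp₂.le (mul_nonneg (sub_nonneg.2 hα) hv0.le)]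
  nlinarith [mul_nonneg (mul_nonneg hB hC) hD]
end

section
/- Let ω ∈ [0,1], u ∈ (0,1), λ > 0, p₁ ≥ p₂ > 0, 0 < α₁ ≤ α₂ ≤ 1, and set q₁ = ωp₁+(1-ω)p₂, q₂ = ωp₂+(1-ω)p₁, β₁ = ωα₁+(1-ω)α₂, β₂ = ωα₂+(1-ω)α₁. Then p₁·α₁u^λ/(1-(1-α₁)u^λ) + p₂·α₂u^λ/(1-(1-α₂)u^λ) ≤ q₁·β₁u^λ/(1-(1-β₁)u^λ) + q₂·β₂u^λ/(1-(1-β₂)u^λ). -/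
private lemma mphr_key (w t p1 p2 a1 a2 : ℝ)
    (hw0 : 0 ≤ w) (hw1 : w ≤ 1) (ht0 : 0 < t) (ht1 : t < 1)
    (hp : p1 ≥ p2) (hp2 : 0 < p2) (ha1 : 0 < a1) (ha : a1 ≤ a2) (ha2 : a2 ≤ 1) :
    p1 * (a1 * t / (1 - (1 - a1) * t)) + p2 * (a2 * t / (1 - (1 - a2) * t)) ≤
    (w * p1 + (1 - w) * p2) *
        ((w * a1 + (1 - w) * a2) * t / (1 - (1 - (w * a1 + (1 - w) * a2)) * t)) +
      (w * p2 + (1 - w) * p1) *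
        ((w * a2 + (1 - w) * a1) * t / (1 - (1 - (w * a2 + (1 - w) * a1)) * t)) := by
  have hd : ∀ a : ℝ, 0 < a → a ≤ 1 → 0 < 1 - (1 - a) * t := by
    intro a h0 h1
    nlinarith
  have hb1l : a1 ≤ w * a1 + (1 - w) * a2 := by nlinarith
  have hb1r : w * a1 + (1 - w) * a2 ≤ a2 := by nlinarith
  have hb2l : a1 ≤ w * a2 + (1 - w) * a1 := by nlinarith
  have hb2r : w * a2 + (1 - w) * a1 ≤ a2 := by nlinarith
  have ha2' : 0 < a2 := lt_of_lt_of_le ha1 ha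
  have hd1 := hd a1 ha1 (le_trans ha ha2)
  have hd2 := hd a2 ha2' ha2
  have hdb1 := hd _ (lt_of_lt_of_le ha1 hb1l) (le_trans hb1r ha2)
  have hdb2 := hd _ (lt_of_lt_of_le ha1 hb2l) (le_trans hb2r ha2)
  have key :
      ((w * p1 + (1 - w) * p2) *
          ((w * a1 + (1 - w) * a2) * t / (1 - (1 - (w * a1 + (1 - w) * a2)) * t)) +
        (w * p2 + (1 - w) * p1) *
          ((w * a2 + (1 - w) * a1) * t / (1 - (1 - (w * a2 + (1 - w) * a1)) * t))) -
      (p1 * (a1 * t / (1 - (1 - a1) * t)) + p2 * (a2 * t / (1 - (1 - a2) * t))) =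
      ((1 - w) * (a2 - a1) * (1 - t) * t * w *
        (2 * (p1 - p2) * (1 - t) ^ 2 +
          t * (1 - t) * (p1 * (3 * a2 + a1) - p2 * (a2 + 3 * a1)) +
          t ^ 2 * (a1 + a2) * (p1 * a2 - p2 * a1))) /
      ((1 - (1 - a1) * t) * (1 - (1 - a2) * t) *
        (1 - (1 - (w * a1 + (1 - w) * a2)) * t) *
        (1 - (1 - (w * a2 + (1 - w) * a1)) * t)) := by
    simp only [mul_div_assoc']
    rw [div_add_div _ _ hdb1.ne' hdb2.ne', div_add_div _ _ hd1.ne' hd2.ne',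
      div_sub_div _ _ (mul_ne_zero hdb1.ne' hdb2.ne') (mul_ne_zero hd1.ne' hd2.ne'),
      div_eq_div_iff (mul_ne_zero (mul_ne_zero hdb1.ne' hdb2.ne') (mul_ne_zero hd1.ne' hd2.ne'))
        (mul_ne_zero (mul_ne_zero (mul_ne_zero hd1.ne' hd2.ne') hdb1.ne') hdb2.ne')]
    ring
  have hnum : 0 ≤ (1 - w) * (a2 - a1) * (1 - t) * t * w *
      (2 * (p1 - p2) * (1 - t) ^ 2 +
        t * (1 - t) * (p1 * (3 * a2 + a1) - p2 * (a2 + 3 * a1)) +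
        t ^ 2 * (a1 + a2) * (p1 * a2 - p2 * a1)) := by
    have h1 : 0 ≤ p1 * (3 * a2 + a1) - p2 * (a2 + 3 * a1) := by nlinarith
    have h2 : 0 ≤ p1 * a2 - p2 * a1 := by nlinarith
    have h3 : 0 ≤ 2 * (p1 - p2) * (1 - t) ^ 2 +
        t * (1 - t) * (p1 * (3 * a2 + a1) - p2 * (a2 + 3 * a1)) +
        t ^ 2 * (a1 + a2) * (p1 * a2 - p2 * a1) := by
      have m1 : 0 ≤ 2 * (p1 - p2) * (1 - t) ^ 2 :=
        mul_nonneg (by linarith) (sq_nonneg _)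
      have m2 : 0 ≤ t * (1 - t) * (p1 * (3 * a2 + a1) - p2 * (a2 + 3 * a1)) :=
        mul_nonneg (mul_nonneg ht0.le (by linarith)) h1
      have m3 : 0 ≤ t ^ 2 * (a1 + a2) * (p1 * a2 - p2 * a1) :=
        mul_nonneg (mul_nonneg (sq_nonneg t) (by linarith)) h2
      linarith
    have h4 : 0 ≤ (1 - w) * (a2 - a1) * (1 - t) * t * w := by
      have := mul_nonneg (mul_nonneg (mul_nonneg (mul_nonneg
        (by linarith : (0:ℝ) ≤ 1 - w) (by linarith : (0:ℝ) ≤ a2 - a1))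
        (by linarith : (0:ℝ) ≤ 1 - t)) (le_of_lt ht0)) hw0
      linarith
    exact mul_nonneg h4 h3
  have hden : 0 < (1 - (1 - a1) * t) * (1 - (1 - a2) * t) *
      (1 - (1 - (w * a1 + (1 - w) * a2)) * t) *
      (1 - (1 - (w * a2 + (1 - w) * a1)) * t) := by positivity
  have : 0 ≤ ((1 - w) * (a2 - a1) * (1 - t) * t * w *
      (2 * (p1 - p2) * (1 - t) ^ 2 +
        t * (1 - t) * (p1 * (3 * a2 + a1) - p2 * (a2 + 3 * a1)) +
        t ^ 2 * (a1 + a2) * (p1 * a2 - p2 * a1))) /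
      ((1 - (1 - a1) * t) * (1 - (1 - a2) * t) *
        (1 - (1 - (w * a1 + (1 - w) * a2)) * t) *
        (1 - (1 - (w * a2 + (1 - w) * a1)) * t)) := div_nonneg hnum hden.le
  linarith [key ▸ this]

/-- a single T-transform of `(p,α) ∈ K₂` increases the two-component
MPHR mixture survival value: `V₂(p,α) ≤_st W₂(q,β)`. -/
theorem mphr_st_order_Ttransform (ω u lam p₁ p₂ α₁ α₂ : ℝ)
    (hω : ω ∈ Set.Icc (0:ℝ) 1) (hu : u ∈ Set.Ioo (0:ℝ) 1) (hlam : 0 < lam)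
    (hp : p₁ ≥ p₂) (hp₂ : 0 < p₂) (hα₁ : 0 < α₁) (hα : α₁ ≤ α₂) (hα₂ : α₂ ≤ 1) :
    p₁ * (α₁ * u ^ lam / (1 - (1 - α₁) * u ^ lam)) +
      p₂ * (α₂ * u ^ lam / (1 - (1 - α₂) * u ^ lam)) ≤
    (ω * p₁ + (1 - ω) * p₂) *
        ((ω * α₁ + (1 - ω) * α₂) * u ^ lam /
          (1 - (1 - (ω * α₁ + (1 - ω) * α₂)) * u ^ lam)) +
      (ω * p₂ + (1 - ω) * p₁) *
        ((ω * α₂ + (1 - ω) * α₁) * u ^ lam /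
          (1 - (1 - (ω * α₂ + (1 - ω) * α₁)) * u ^ lam)) := by
  have ht0 : 0 < u ^ lam := Real.rpow_pos_of_pos hu.1 lam
  have ht1 : u ^ lam < 1 := Real.rpow_lt_one hu.1.le hu.2 hlam
  exact mphr_key ω (u ^ lam) p₁ p₂ α₁ α₂ hω.1 hω.2 ht0 ht1 hp hp₂ hα₁ hα hα₂
end

section
/- Let u ∈ (0,1), α ∈ (0,1], λ₁, λ₂ > 0, and write G(p₁,p₂,λ₁,λ₂) = p₁·αu^{λ₁}/(1-(1-α)u^{λ₁}) + p₂·αu^{λ₂}/(1-(1-α)u^{λ₂}). If p₁ ≥ p₂ > 0 and λ₁ ≤ λ₂, then (p₁-p₂)(∂G/∂p₁ - ∂G/∂p₂) + (λ₁-λ₂)(∂G/∂λ₁ - ∂G/∂λ₂) ≥ 0. -/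
open Real

/-- Two-component MPHR mixture survival value with common tilt `α` and rates `λ₁, λ₂`. -/
noncomputable def mphrMixRate (u α p₁ p₂ l₁ l₂ : ℝ) : ℝ :=
  p₁ * (α * u ^ l₁ / (1 - (1 - α) * u ^ l₁)) +
  p₂ * (α * u ^ l₂ / (1 - (1 - α) * u ^ l₂))

/-- Derivative of the single-component MPHR hazard factor in the rate parameter. -/
lemma mphr_aux_deriv (u α t : ℝ) (hu0 : 0 < u)
    (hD : 1 - (1 - α) * u ^ t ≠ 0) :
    HasDerivAt (fun s : ℝ => α * u ^ s / (1 - (1 - α) * u ^ s))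
      (α * u ^ t * Real.log u / (1 - (1 - α) * u ^ t) ^ 2) t := by
  have hpow : HasDerivAt (fun s : ℝ => u ^ s) (u ^ t * Real.log u) t :=
    (Real.hasStrictDerivAt_const_rpow hu0 t).hasDerivAt
  have hnum : HasDerivAt (fun s : ℝ => α * u ^ s) (α * (u ^ t * Real.log u)) t :=
    hpow.const_mul α
  have hden : HasDerivAt (fun s : ℝ => 1 - (1 - α) * u ^ s)
      (0 - (1 - α) * (u ^ t * Real.log u)) t :=
    (hasDerivAt_const t 1).sub (hpow.const_mul (1 - α))
  have : HasDerivAt (fun s : ℝ => α * u ^ s / (1 - (1 - α) * u ^ s)) _ t := hnum.div hden hD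
  convert this using 1
  field_simp
  ring

set_option maxHeartbeats 1000000 in
/-- Schur-type condition (Theorem 3(i)): if `p₁ ≥ p₂ > 0` and `λ₁ ≤ λ₂`,
then `(p₁-p₂)(∂G/∂p₁ - ∂G/∂p₂) + (λ₁-λ₂)(∂G/∂λ₁ - ∂G/∂λ₂) ≥ 0`. -/
theorem mphr_rate_schur (u α p₁ p₂ l₁ l₂ : ℝ) (hu : u ∈ Set.Ioo (0:ℝ) 1)
    (hα : α ∈ Set.Ioc (0:ℝ) 1) (hl₁ : 0 < l₁) (hl₂ : 0 < l₂)
    (hp : p₁ ≥ p₂) (hp₂ : 0 < p₂) (hl : l₁ ≤ l₂) :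
    0 ≤ (p₁ - p₂) *
        (deriv (fun t => mphrMixRate u α t p₂ l₁ l₂) p₁ -
         deriv (fun t => mphrMixRate u α p₁ t l₁ l₂) p₂) +
      (l₁ - l₂) *
        (deriv (fun t => mphrMixRate u α p₁ p₂ t l₂) l₁ -
         deriv (fun t => mphrMixRate u α p₁ p₂ l₁ t) l₂) := by
  obtain ⟨hu0, hu1⟩ := hu
  obtain ⟨hα0, hα1⟩ := hα
  set x₁ := u ^ l₁ with hx₁
  set x₂ := u ^ l₂ with hx₂
  have hx₁pos : 0 < x₁ := Real.rpow_pos_of_pos hu0 _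
  have hx₂pos : 0 < x₂ := Real.rpow_pos_of_pos hu0 _
  have hx₁lt : x₁ < 1 := Real.rpow_lt_one hu0.le hu1 hl₁
  have hx₂lt : x₂ < 1 := Real.rpow_lt_one hu0.le hu1 hl₂
  have hxle : x₂ ≤ x₁ := Real.rpow_le_rpow_of_exponent_ge hu0 hu1.le hl
  have hb : 0 ≤ 1 - α := by linarith
  have hD₁ : 0 < 1 - (1 - α) * x₁ := by nlinarith
  have hD₂ : 0 < 1 - (1 - α) * x₂ := by nlinarith
  have hL : Real.log u < 0 := Real.log_neg hu0 hu1
  -- p-derivatives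
  have d1 : deriv (fun t => mphrMixRate u α t p₂ l₁ l₂) p₁
      = α * x₁ / (1 - (1 - α) * x₁) := by
    have : HasDerivAt (fun t => mphrMixRate u α t p₂ l₁ l₂)
        (α * x₁ / (1 - (1 - α) * x₁)) p₁ := by
      simpa [mphrMixRate] using
        ((hasDerivAt_id p₁).mul_const (α * x₁ / (1 - (1 - α) * x₁))).add_const
          (p₂ * (α * x₂ / (1 - (1 - α) * x₂)))
    exact this.deriv
  have d2 : deriv (fun t => mphrMixRate u α p₁ t l₁ l₂) p₂
      = α * x₂ / (1 - (1 - α) * x₂) := by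
    have : HasDerivAt (fun t => mphrMixRate u α p₁ t l₁ l₂)
        (α * x₂ / (1 - (1 - α) * x₂)) p₂ := by
      simpa [mphrMixRate] using
        (((hasDerivAt_id p₂).mul_const (α * x₂ / (1 - (1 - α) * x₂)))).const_add
          (p₁ * (α * x₁ / (1 - (1 - α) * x₁)))
    exact this.deriv
  -- λ-derivatives
  have d3 : deriv (fun t => mphrMixRate u α p₁ p₂ t l₂) l₁
      = p₁ * (α * x₁ * Real.log u / (1 - (1 - α) * x₁) ^ 2) := by
    have : HasDerivAt (fun t => mphrMixRate u α p₁ p₂ t l₂)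
        (p₁ * (α * x₁ * Real.log u / (1 - (1 - α) * x₁) ^ 2)) l₁ := by
      simpa [mphrMixRate] using
        (((mphr_aux_deriv u α l₁ hu0 hD₁.ne').const_mul p₁)).add_const
          (p₂ * (α * x₂ / (1 - (1 - α) * x₂)))
    exact this.deriv
  have d4 : deriv (fun t => mphrMixRate u α p₁ p₂ l₁ t) l₂
      = p₂ * (α * x₂ * Real.log u / (1 - (1 - α) * x₂) ^ 2) := by
    have : HasDerivAt (fun t => mphrMixRate u α p₁ p₂ l₁ t)
        (p₂ * (α * x₂ * Real.log u / (1 - (1 - α) * x₂) ^ 2)) l₂ := by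
      simpa [mphrMixRate] using
        (((mphr_aux_deriv u α l₂ hu0 hD₂.ne').const_mul p₂)).const_add
          (p₁ * (α * x₁ / (1 - (1 - α) * x₁)))
    exact this.deriv
  rw [d1, d2, d3, d4]
  have hA : 0 ≤ (p₁ - p₂) *
      (α * x₁ / (1 - (1 - α) * x₁) - α * x₂ / (1 - (1 - α) * x₂)) := by
    apply mul_nonneg (by linarith)
    rw [div_sub_div _ _ hD₁.ne' hD₂.ne']
    apply div_nonneg _ (by positivity)
    nlinarith
  have hB : 0 ≤ (l₁ - l₂) *
      (p₁ * (α * x₁ * Real.log u / (1 - (1 - α) * x₁) ^ 2) -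
       p₂ * (α * x₂ * Real.log u / (1 - (1 - α) * x₂) ^ 2)) := by
    apply mul_nonneg_of_nonpos_of_nonpos (by linarith)
    rw [sub_nonpos]
    have hαL : α * Real.log u ≤ 0 := mul_nonpos_of_nonneg_of_nonpos hα0.le hL.le
    have key : x₂ * (1 - (1 - α) * x₁) ^ 2 ≤ x₁ * (1 - (1 - α) * x₂) ^ 2 := by
      nlinarith [mul_nonneg (sub_nonneg.2 hxle)
        (show (0:ℝ) ≤ 1 - (1 - α) ^ 2 * (x₁ * x₂) by
          nlinarith [mul_nonneg (mul_nonneg hx₁pos.le hx₂pos.le)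
            (show (0:ℝ) ≤ 1 - (1 - α) ^ 2 by nlinarith), mul_pos hx₁pos hx₂pos])]
    have key2 : p₂ * x₂ * (1 - (1 - α) * x₁) ^ 2 ≤ p₁ * x₁ * (1 - (1 - α) * x₂) ^ 2 := by
      nlinarith [mul_le_mul_of_nonneg_left key hp₂.le,
        mul_le_mul_of_nonneg_right (le_trans hp₂.le hp)
          (mul_nonneg hx₁pos.le (sq_nonneg (1 - (1 - α) * x₂)))]
    have e1 : p₁ * (α * x₁ * Real.log u / (1 - (1 - α) * x₁) ^ 2)
        = α * Real.log u * (p₁ * x₁) / (1 - (1 - α) * x₁) ^ 2 := by ring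
    have e2 : p₂ * (α * x₂ * Real.log u / (1 - (1 - α) * x₂) ^ 2)
        = α * Real.log u * (p₂ * x₂) / (1 - (1 - α) * x₂) ^ 2 := by ring
    rw [e1, e2, div_le_div_iff₀ (by positivity) (by positivity)]
    have hm := mul_le_mul_of_nonpos_left key2 hαL
    linarith [hm]
  linarith
end

section
/- Let u ∈ (0,1), 0 < α ≤ 1, p₁ ≥ p₂ > 0 and 0 < λ₁ ≤ λ₂. Then (p₁-p₂)·(u^{λ₁}-u^{λ₂})·(1-(1-α)u^{λ₁})·(1-(1-α)u^{λ₂}) + ln(u)·(λ₁-λ₂)·[p₁u^{λ₁}(1-(1-α)u^{λ₂})² - p₂u^{λ₂}(1-(1-α)u^{λ₁})²] ≥ 0. -/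
/-- explicit sign inequality underlying Theorem 3(i). -/
theorem mphr_rate_sign (u α p₁ p₂ l₁ l₂ : ℝ) (hu : u ∈ Set.Ioo (0:ℝ) 1)
    (hα₀ : 0 < α) (hα : α ≤ 1) (hp : p₁ ≥ p₂) (hp₂ : 0 < p₂)
    (hl₁ : 0 < l₁) (hl : l₁ ≤ l₂) :
    0 ≤ (p₁ - p₂) * (u ^ l₁ - u ^ l₂) *
        ((1 - (1 - α) * u ^ l₁) * (1 - (1 - α) * u ^ l₂)) +
      Real.log u * (l₁ - l₂) *
        (p₁ * u ^ l₁ * (1 - (1 - α) * u ^ l₂) ^ 2 -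
         p₂ * u ^ l₂ * (1 - (1 - α) * u ^ l₁) ^ 2) := by
  obtain ⟨hu0, hu1⟩ := hu
  have hl₂ : 0 < l₂ := hl₁.trans_le hl
  have ha : (0:ℝ) < u ^ l₁ := Real.rpow_pos_of_pos hu0 _
  have hb : (0:ℝ) < u ^ l₂ := Real.rpow_pos_of_pos hu0 _
  have hab : u ^ l₂ ≤ u ^ l₁ := Real.rpow_le_rpow_of_exponent_ge hu0 hu1.le hl
  have ha1 : u ^ l₁ < 1 := Real.rpow_lt_one hu0.le hu1 hl₁
  have hb1 : u ^ l₂ < 1 := Real.rpow_lt_one hu0.le hu1 hl₂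
  have h1α : 0 ≤ 1 - α := by linarith
  have hf1 : 0 < 1 - (1 - α) * u ^ l₁ := by nlinarith
  have hf2 : 0 < 1 - (1 - α) * u ^ l₂ := by nlinarith
  have hff : 1 - (1 - α) * u ^ l₁ ≤ 1 - (1 - α) * u ^ l₂ := by nlinarith
  have hlog : Real.log u ≤ 0 := Real.log_nonpos hu0.le hu1.le
  have hsq : (1 - (1 - α) * u ^ l₁) ^ 2 ≤ (1 - (1 - α) * u ^ l₂) ^ 2 :=
    pow_le_pow_left₀ hf1.le hff 2
  have hbr : p₂ * u ^ l₂ * (1 - (1 - α) * u ^ l₁) ^ 2 ≤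
      p₁ * u ^ l₁ * (1 - (1 - α) * u ^ l₂) ^ 2 := by
    have h1 : p₂ * u ^ l₂ ≤ p₁ * u ^ l₁ :=
      mul_le_mul hp hab hb.le (hp₂.le.trans hp)
    exact mul_le_mul h1 hsq (sq_nonneg _) (mul_nonneg (hp₂.le.trans hp) ha.le)
  have t1 : 0 ≤ (p₁ - p₂) * (u ^ l₁ - u ^ l₂) *
      ((1 - (1 - α) * u ^ l₁) * (1 - (1 - α) * u ^ l₂)) :=
    mul_nonneg (mul_nonneg (by linarith) (by linarith)) (mul_nonneg hf1.le hf2.le)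
  have t2 : 0 ≤ Real.log u * (l₁ - l₂) := by
    have : l₁ - l₂ ≤ 0 := by linarith
    nlinarith
  nlinarith [mul_nonneg t2 (sub_nonneg.mpr hbr)]
end

section
/- Let ω ∈ [0,1], u ∈ (0,1), α ∈ (0,1], p₁ ≥ p₂ > 0, 0 < λ₁ ≤ λ₂, and set q₁ = ωp₁+(1-ω)p₂, q₂ = ωp₂+(1-ω)p₁, θ₁ = ωλ₁+(1-ω)λ₂, θ₂ = ωλ₂+(1-ω)λ₁. Then p₁·αu^{λ₁}/(1-(1-α)u^{λ₁}) + p₂·αu^{λ₂}/(1-(1-α)u^{λ₂}) ≥ q₁·αu^{θ₁}/(1-(1-α)u^{θ₁}) + q₂·αu^{θ₂}/(1-(1-α)u^{θ₂}). -/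
/-- Monotonicity of `t ↦ α t / (1 - c t)` on `[0, 1/c)`. -/
lemma f_mono_aux (α c s t : ℝ) (hα : 0 < α) (hc : 0 ≤ c) (hst : s ≤ t)
    (hdt : c * t < 1) :
    α * s / (1 - c * s) ≤ α * t / (1 - c * t) := by
  have hds : c * s < 1 := lt_of_le_of_lt (by nlinarith) hdt
  have h1 : 0 < 1 - c * s := by linarith
  have h2 : 0 < 1 - c * t := by linarith
  rw [div_le_div_iff₀ h1 h2]
  nlinarith [mul_nonneg hα.le (sub_nonneg.2 hst)]

/-- Two-point convexity of `t ↦ α t / (1 - c t)`. -/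
lemma f_convex_aux (α c ω s t : ℝ) (hα : 0 < α) (hc : 0 ≤ c) (hω : 0 ≤ ω) (hω1 : ω ≤ 1)
    (hds : c * s < 1) (hdt : c * t < 1) :
    α * (ω * s + (1 - ω) * t) / (1 - c * (ω * s + (1 - ω) * t)) ≤
      ω * (α * s / (1 - c * s)) + (1 - ω) * (α * t / (1 - c * t)) := by
  have h1 : 0 < 1 - c * s := by linarith
  have h2 : 0 < 1 - c * t := by linarith
  have hDm : 0 < 1 - c * (ω * s + (1 - ω) * t) := by
    rcases eq_or_lt_of_le hω1 with h | h
    · simp [h]; linarith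
    · nlinarith [mul_nonneg hω h1.le, mul_pos (by linarith : (0:ℝ) < 1 - ω) h2]
  rw [mul_div_assoc', mul_div_assoc', div_add_div _ _ (ne_of_gt h1) (ne_of_gt h2),
    div_le_div_iff₀ hDm (mul_pos h1 h2)]
  nlinarith [mul_nonneg (mul_nonneg (mul_nonneg hα.le hc)
    (mul_nonneg hω (by linarith : (0:ℝ) ≤ 1 - ω))) (sq_nonneg (t - s))]

/-- Main abstract inequality. -/
lemma mphr_main_aux (α c ω p₁ p₂ s t x₁ x₂ : ℝ) (hα : 0 < α) (hc : 0 ≤ c)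
    (hω0 : 0 ≤ ω) (hω1 : ω ≤ 1) (hp : p₂ ≤ p₁) (hp₂ : 0 < p₂)
    (hts : t ≤ s) (hcs : c * s < 1) (hct : c * t < 1)
    (am₁ : x₁ ≤ ω * s + (1 - ω) * t) (am₂ : x₂ ≤ ω * t + (1 - ω) * s) :
    (ω * p₁ + (1 - ω) * p₂) * (α * x₁ / (1 - c * x₁)) +
      (ω * p₂ + (1 - ω) * p₁) * (α * x₂ / (1 - c * x₂)) ≤
    p₁ * (α * s / (1 - c * s)) + p₂ * (α * t / (1 - c * t)) := by
  have hω1' : 0 ≤ 1 - ω := by linarith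
  have hm₁ : c * (ω * s + (1 - ω) * t) < 1 := by
    have h : ω * s + (1 - ω) * t ≤ s := by nlinarith
    nlinarith [mul_le_mul_of_nonneg_left h hc]
  have hm₂ : c * (ω * t + (1 - ω) * s) < 1 := by
    have h : ω * t + (1 - ω) * s ≤ s := by nlinarith
    nlinarith [mul_le_mul_of_nonneg_left h hc]
  have key₁ : α * x₁ / (1 - c * x₁) ≤
      ω * (α * s / (1 - c * s)) + (1 - ω) * (α * t / (1 - c * t)) :=
    le_trans (f_mono_aux α c _ _ hα hc am₁ hm₁)
      (f_convex_aux α c ω s t hα hc hω0 hω1 hcs hct)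
  have key₂ : α * x₂ / (1 - c * x₂) ≤
      ω * (α * t / (1 - c * t)) + (1 - ω) * (α * s / (1 - c * s)) :=
    le_trans (f_mono_aux α c _ _ hα hc am₂ hm₂)
      (f_convex_aux α c ω t s hα hc hω0 hω1 hct hcs)
  have hmono : α * t / (1 - c * t) ≤ α * s / (1 - c * s) :=
    f_mono_aux α c t s hα hc hts hcs
  have hq₁ : 0 ≤ ω * p₁ + (1 - ω) * p₂ := by nlinarith
  have hq₂ : 0 ≤ ω * p₂ + (1 - ω) * p₁ := by nlinarith
  nlinarith [mul_le_mul_of_nonneg_left key₁ hq₁, mul_le_mul_of_nonneg_left key₂ hq₂,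
    mul_nonneg (mul_nonneg (mul_nonneg hω0 hω1') (sub_nonneg.2 hp))
      (sub_nonneg.2 hmono)]

/-- usual stochastic order `Z₂(p,λ) ≥_st Y₂(q,θ)` under a single
T-transform for MPHR mixtures with common tilt parameter `α` (Theorem 3(i)). -/
theorem mphr_rate_st_order (ω u α p₁ p₂ l₁ l₂ : ℝ)
    (hω : ω ∈ Set.Icc (0:ℝ) 1) (hu : u ∈ Set.Ioo (0:ℝ) 1)
    (hα₀ : 0 < α) (hα : α ≤ 1) (hp : p₁ ≥ p₂) (hp₂ : 0 < p₂)
    (hl₁ : 0 < l₁) (hl : l₁ ≤ l₂) :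
    p₁ * (α * u ^ l₁ / (1 - (1 - α) * u ^ l₁)) +
      p₂ * (α * u ^ l₂ / (1 - (1 - α) * u ^ l₂)) ≥
    (ω * p₁ + (1 - ω) * p₂) *
        (α * u ^ (ω * l₁ + (1 - ω) * l₂) /
          (1 - (1 - α) * u ^ (ω * l₁ + (1 - ω) * l₂))) +
      (ω * p₂ + (1 - ω) * p₁) *
        (α * u ^ (ω * l₂ + (1 - ω) * l₁) /
          (1 - (1 - α) * u ^ (ω * l₂ + (1 - ω) * l₁))) := by
  obtain ⟨hω0, hω1⟩ := hω
  obtain ⟨hu0, hu1⟩ := hu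
  have hω1' : 0 ≤ 1 - ω := by linarith
  have hc0 : (0:ℝ) ≤ 1 - α := by linarith
  have hl₂ : 0 < l₂ := lt_of_lt_of_le hl₁ hl
  have hs0 : 0 < u ^ l₁ := Real.rpow_pos_of_pos hu0 _
  have ht0 : 0 < u ^ l₂ := Real.rpow_pos_of_pos hu0 _
  have hs1 : u ^ l₁ < 1 := Real.rpow_lt_one hu0.le hu1 hl₁
  have ht1 : u ^ l₂ < 1 := Real.rpow_lt_one hu0.le hu1 hl₂
  have hts : u ^ l₂ ≤ u ^ l₁ := Real.rpow_le_rpow_of_exponent_ge hu0 hu1.le hl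
  have hcs : (1 - α) * u ^ l₁ < 1 := by nlinarith
  have hct : (1 - α) * u ^ l₂ < 1 := by nlinarith
  have e₁ : u ^ (ω * l₁ + (1 - ω) * l₂) = (u ^ l₁) ^ ω * (u ^ l₂) ^ (1 - ω) := by
    rw [Real.rpow_add hu0, mul_comm ω l₁, mul_comm (1 - ω) l₂,
      Real.rpow_mul hu0.le, Real.rpow_mul hu0.le]
  have e₂ : u ^ (ω * l₂ + (1 - ω) * l₁) = (u ^ l₂) ^ ω * (u ^ l₁) ^ (1 - ω) := by
    rw [Real.rpow_add hu0, mul_comm ω l₂, mul_comm (1 - ω) l₁,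
      Real.rpow_mul hu0.le, Real.rpow_mul hu0.le]
  have am₁ : (u ^ l₁) ^ ω * (u ^ l₂) ^ (1 - ω) ≤ ω * u ^ l₁ + (1 - ω) * u ^ l₂ :=
    Real.geom_mean_le_arith_mean2_weighted hω0 hω1' hs0.le ht0.le (by ring)
  have am₂ : (u ^ l₂) ^ ω * (u ^ l₁) ^ (1 - ω) ≤ ω * u ^ l₂ + (1 - ω) * u ^ l₁ :=
    Real.geom_mean_le_arith_mean2_weighted hω0 hω1' ht0.le hs0.le (by ring)
  rw [e₁, e₂]
  exact mphr_main_aux α (1 - α) ω p₁ p₂ (u ^ l₁) (u ^ l₂) _ _ hα₀ hc0 hω0 hω1 hp hp₂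
    hts hcs hct am₁ am₂
end

section
/- Let u ∈ (0,1), p₁, p₂ > 0, 0 < α₁ ≤ α₂ ≤ 1 with p₁α₁ = p₂α₂ (hence p₁ ≥ p₂), and set M₁ = 1-(1-α₁)u, M₂ = 1-(1-α₂)u. Then (p₁-p₂)(p₁+p₂)α₁α₂M₁M₂(M₂³-M₁³) + (α₁-α₂)(α₁+α₂)p₁p₂M₁M₂(M₂³-M₁³) + (α₁-α₂)M₁M₂u[M₁M₂(p₂²α₂²-p₁²α₁²) + 2u(p₂²α₂²M₁² - p₁²α₁²M₂²)] + (α₁-α₂)p₁p₂α₁α₂u(M₁⁴-M₂⁴) ≥ 0. -/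
/-- key inequality (equation (6)) in the proof of Theorem 5. -/
theorem mphr_hazard_key_ineq (u p₁ p₂ α₁ α₂ : ℝ) (hu : u ∈ Set.Ioo (0:ℝ) 1)
    (hp₁ : 0 < p₁) (hp₂ : 0 < p₂) (hα₁ : 0 < α₁) (hα : α₁ ≤ α₂) (hα₂ : α₂ ≤ 1)
    (hpa : p₁ * α₁ = p₂ * α₂) :
    0 ≤ (p₁ - p₂) * (p₁ + p₂) * α₁ * α₂ *
          ((1 - (1 - α₁) * u) * (1 - (1 - α₂) * u)) *
          ((1 - (1 - α₂) * u) ^ 3 - (1 - (1 - α₁) * u) ^ 3) +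
        (α₁ - α₂) * (α₁ + α₂) * p₁ * p₂ *
          ((1 - (1 - α₁) * u) * (1 - (1 - α₂) * u)) *
          ((1 - (1 - α₂) * u) ^ 3 - (1 - (1 - α₁) * u) ^ 3) +
        (α₁ - α₂) * ((1 - (1 - α₁) * u) * (1 - (1 - α₂) * u)) * u *
          ((1 - (1 - α₁) * u) * (1 - (1 - α₂) * u) *
              (p₂ ^ 2 * α₂ ^ 2 - p₁ ^ 2 * α₁ ^ 2) +
            2 * u * (p₂ ^ 2 * α₂ ^ 2 * (1 - (1 - α₁) * u) ^ 2 -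
              p₁ ^ 2 * α₁ ^ 2 * (1 - (1 - α₂) * u) ^ 2)) +
        (α₁ - α₂) * p₁ * p₂ * α₁ * α₂ * u *
          ((1 - (1 - α₁) * u) ^ 4 - (1 - (1 - α₂) * u) ^ 4) := by
  obtain ⟨hu0, hu1⟩ := hu
  set M₁ : ℝ := 1 - (1 - α₁) * u with hM₁def
  set M₂ : ℝ := 1 - (1 - α₂) * u with hM₂def
  have h2 : p₁ ^ 2 * α₁ ^ 2 = p₂ ^ 2 * α₂ ^ 2 := by
    linear_combination (p₁ * α₁ + p₂ * α₂) * hpa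
  have hM1 : 0 < M₁ := by rw [hM₁def]; nlinarith
  have hM2 : 0 < M₂ := by rw [hM₂def]; nlinarith
  have hMle : M₁ ≤ M₂ := by rw [hM₁def, hM₂def]; nlinarith
  have key :
      (p₁ - p₂) * (p₁ + p₂) * α₁ * α₂ * (M₁ * M₂) * (M₂ ^ 3 - M₁ ^ 3) +
        (α₁ - α₂) * (α₁ + α₂) * p₁ * p₂ * (M₁ * M₂) * (M₂ ^ 3 - M₁ ^ 3) +
        (α₁ - α₂) * (M₁ * M₂) * u *
          (M₁ * M₂ * (p₂ ^ 2 * α₂ ^ 2 - p₁ ^ 2 * α₁ ^ 2) +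
            2 * u * (p₂ ^ 2 * α₂ ^ 2 * M₁ ^ 2 - p₁ ^ 2 * α₁ ^ 2 * M₂ ^ 2)) +
        (α₁ - α₂) * p₁ * p₂ * α₁ * α₂ * u * (M₁ ^ 4 - M₂ ^ 4) =
      2 * u ^ 2 * (p₁ * α₁) ^ 2 * (α₂ - α₁) * M₁ * M₂ * (M₂ ^ 2 - M₁ ^ 2) +
        (α₂ - α₁) * p₁ * p₂ * α₁ * α₂ * u * (M₂ ^ 4 - M₁ ^ 4) := by
    linear_combination (M₁ * M₂ * (M₂ ^ 3 - M₁ ^ 3) * (p₁ * α₂ + p₂ * α₁)) * hpa -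
      ((α₁ - α₂) * M₁ * M₂ * u * (M₁ * M₂ + 2 * u * M₁ ^ 2)) * h2
  rw [key]
  have h1 : 0 ≤ M₂ ^ 2 - M₁ ^ 2 := by nlinarith
  have h4 : 0 ≤ M₂ ^ 4 - M₁ ^ 4 := by
    have e : M₂ ^ 4 - M₁ ^ 4 = (M₂ ^ 2 - M₁ ^ 2) * (M₂ ^ 2 + M₁ ^ 2) := by ring
    rw [e]; exact mul_nonneg h1 (by positivity)
  have ha : 0 ≤ α₂ - α₁ := by linarith
  have t1 : 0 ≤ 2 * u ^ 2 * (p₁ * α₁) ^ 2 * (α₂ - α₁) * M₁ * M₂ * (M₂ ^ 2 - M₁ ^ 2) := by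
    positivity
  have t2 : 0 ≤ (α₂ - α₁) * p₁ * p₂ * α₁ * α₂ * u * (M₂ ^ 4 - M₁ ^ 4) := by
    have : 0 < α₂ := lt_of_lt_of_le hα₁ hα
    positivity
  linarith
end
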